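/- arXiv:1104.1099 — 3 statements merged into one kernel-verified Lean document; each statement's English description precedes it below -/
import Mathlib

section
/- Let I be a measurable space. For g : I^m → ℝ bounded measurable, χ : I → [0,1] measurable, and i ∈ {1,…,m}, the F⁺-selection output ĝ(u_1,…,u_{m+1}) = χ(u_i)g(u_1,…,u_m) + (1−χ(u_{m+1}))g(u_1,…,u_m) and the G⁺-selection output g̃(u_1,…,u_{m+1}) = χ(u_i)g(u_1,…,u_m) + (1−χ(u_i))g(u_1,…,u_{i−1},u_{m+1},u_{i+1},…,u_m) satisfy ∫_{I^{m+1}} ĝ d(μ_1⊗⋯⊗μ_{m+1}) = ∫_{I^{m+1}} g̃ d(μ_1⊗⋯⊗μ_{m+1}) for all probability measures μ_1,…,μ_{m+1} on I with μ_i = μ_{m+1}. -/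
open MeasureTheory

/-- The `F⁺`- and `G⁺`-selection transitions give the same integral against any product of
probability measures whose `i`-th and `(m+1)`-th factors coincide. -/
theorem selection_transitions_same_integral
    {I : Type*} [MeasurableSpace I] {m : ℕ}
    (g : (Fin m → I) → ℝ) (hg : Measurable g) (C : ℝ) (hbd : ∀ u, |g u| ≤ C)
    (χ : I → ℝ) (hχ : Measurable χ) (hχ0 : ∀ u, 0 ≤ χ u) (hχ1 : ∀ u, χ u ≤ 1)
    (i : Fin m)
    (μ : Fin (m + 1) → Measure I) [∀ k, IsProbabilityMeasure (μ k)]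
    (hμ : μ i.castSucc = μ (Fin.last m))
    (ghat gtil : (Fin (m + 1) → I) → ℝ)
    (hghat : ∀ v : Fin (m + 1) → I,
      ghat v = χ (v i.castSucc) * g (v ∘ Fin.castSucc)
        + (1 - χ (v (Fin.last m))) * g (v ∘ Fin.castSucc))
    (hgtil : ∀ v : Fin (m + 1) → I,
      gtil v = χ (v i.castSucc) * g (v ∘ Fin.castSucc)
        + (1 - χ (v i.castSucc)) *
            g (Function.update (v ∘ Fin.castSucc) i (v (Fin.last m)))) :
    ∫ v, ghat v ∂(Measure.pi μ) = ∫ v, gtil v ∂(Measure.pi μ) := by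
  classical
  set P : Measure (Fin (m + 1) → I) := Measure.pi μ with hP
  -- the three pieces
  set f1 : (Fin (m + 1) → I) → ℝ :=
    fun v => χ (v i.castSucc) * g (v ∘ Fin.castSucc) with hf1
  set f2 : (Fin (m + 1) → I) → ℝ :=
    fun v => (1 - χ (v (Fin.last m))) * g (v ∘ Fin.castSucc) with hf2
  set f3 : (Fin (m + 1) → I) → ℝ :=
    fun v => (1 - χ (v i.castSucc)) *
      g (Function.update (v ∘ Fin.castSucc) i (v (Fin.last m))) with hf3
  have hmcs : Measurable fun v : Fin (m + 1) → I => v ∘ Fin.castSucc :=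
    measurable_pi_lambda _ fun j => measurable_pi_apply _
  have hmupd : Measurable fun v : Fin (m + 1) → I =>
      Function.update (v ∘ Fin.castSucc) i (v (Fin.last m)) := by
    apply measurable_pi_lambda
    intro j
    by_cases hji : j = i
    · subst hji
      simpa using measurable_pi_apply (Fin.last m)
    · have : (fun v : Fin (m + 1) → I =>
          Function.update (v ∘ Fin.castSucc) i (v (Fin.last m)) j)
          = fun v => v j.castSucc := by
        funext v; simp [Function.update_of_ne hji]
      rw [this]; exact measurable_pi_apply _
  have hm1 : Measurable f1 :=
    (hχ.comp (measurable_pi_apply _)).mul (hg.comp hmcs)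
  have hm2 : Measurable f2 :=
    ((measurable_const.sub (hχ.comp (measurable_pi_apply _)))).mul (hg.comp hmcs)
  have hm3 : Measurable f3 :=
    ((measurable_const.sub (hχ.comp (measurable_pi_apply _)))).mul (hg.comp hmupd)
  have hbound : ∀ (a b : ℝ), 0 ≤ a → a ≤ 1 → |b| ≤ C → |a * b| ≤ C := by
    intro a b h0 h1 hb
    rw [abs_mul]
    calc |a| * |b| ≤ 1 * C := by
          apply mul_le_mul _ hb (abs_nonneg _) zero_le_one
          rwa [abs_of_nonneg h0]
      _ = C := one_mul C
  have hint : ∀ f : (Fin (m + 1) → I) → ℝ, Measurable f → (∀ v, |f v| ≤ C) →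
      Integrable f P := by
    intro f hf hb
    exact ⟨hf.aestronglyMeasurable,
      HasFiniteIntegral.of_bounded (C := C) (Filter.Eventually.of_forall hb)⟩
  have hi1 : Integrable f1 P :=
    hint f1 hm1 (fun v => hbound _ _ (hχ0 _) (hχ1 _) (hbd _))
  have hi2 : Integrable f2 P :=
    hint f2 hm2 (fun v => hbound _ _ (by linarith [hχ1 (v (Fin.last m))])
      (by linarith [hχ0 (v (Fin.last m))]) (hbd _))
  have hi3 : Integrable f3 P :=
    hint f3 hm3 (fun v => hbound _ _ (by linarith [hχ1 (v i.castSucc)])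
      (by linarith [hχ0 (v i.castSucc)]) (hbd _))
  -- the swap equivalence
  set e : Fin (m + 1) ≃ Fin (m + 1) := Equiv.swap i.castSucc (Fin.last m) with he
  have hne : i.castSucc ≠ Fin.last m := (Fin.castSucc_lt_last i).ne
  have hμe : (fun k => μ (e k)) = μ := by
    funext k
    by_cases h1 : k = i.castSucc
    · subst h1; rw [he, Equiv.swap_apply_left]; exact hμ.symm
    · by_cases h2 : k = Fin.last m
      · subst h2; rw [he, Equiv.swap_apply_right]; exact hμ
      · rw [he, Equiv.swap_apply_of_ne_of_ne h1 h2]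
  have hmp : MeasurePreserving (MeasurableEquiv.piCongrLeft (fun _ => I) e) P P := by
    have := measurePreserving_piCongrLeft (α := fun _ : Fin (m+1) => I) μ e
    rwa [hμe] at this
  have hTv : ∀ (v : Fin (m + 1) → I) (k : Fin (m + 1)),
      (MeasurableEquiv.piCongrLeft (fun _ => I) e) v k = v (e.symm k) := by
    intro v k
    have h := Equiv.piCongrLeft_apply_apply (P := fun _ : Fin (m+1) => I) e v (e.symm k)
    rw [Equiv.apply_symm_apply] at h
    exact h
  -- key pointwise identity: f2 ∘ T = f3
  have hkey : ∀ v, f2 ((MeasurableEquiv.piCongrLeft (fun _ => I) e) v) = f3 v := by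
    intro v
    have hlast : (MeasurableEquiv.piCongrLeft (fun _ => I) e) v (Fin.last m)
        = v i.castSucc := by
      rw [hTv]
      congr 1
      rw [he, Equiv.symm_swap, Equiv.swap_apply_right]
    have hcs : ((MeasurableEquiv.piCongrLeft (fun _ => I) e) v ∘ Fin.castSucc)
        = Function.update (v ∘ Fin.castSucc) i (v (Fin.last m)) := by
      funext j
      by_cases hji : j = i
      · subst hji
        simp only [Function.comp_apply, Function.update_self]
        rw [hTv, he, Equiv.symm_swap, Equiv.swap_apply_left]
      · have h1 : j.castSucc ≠ i.castSucc := by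
          simp [Fin.castSucc_inj, hji]
        have h2 : j.castSucc ≠ Fin.last m := (Fin.castSucc_lt_last j).ne
        simp only [Function.comp_apply, Function.update_of_ne hji]
        rw [hTv, he, Equiv.symm_swap, Equiv.swap_apply_of_ne_of_ne h1 h2]
    simp only [hf2, hf3, hlast, hcs]
  have h23 : ∫ v, f2 v ∂P = ∫ v, f3 v ∂P := by
    rw [← hmp.integral_comp (MeasurableEquiv.piCongrLeft (fun _ => I) e).measurableEmbedding f2]
    exact integral_congr_ae (Filter.Eventually.of_forall hkey)
  calc ∫ v, ghat v ∂P = ∫ v, (f1 v + f2 v) ∂P :=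
        integral_congr_ae (Filter.Eventually.of_forall fun v => hghat v)
    _ = ∫ v, f1 v ∂P + ∫ v, f2 v ∂P := integral_add hi1 hi2
    _ = ∫ v, f1 v ∂P + ∫ v, f3 v ∂P := by rw [h23]
    _ = ∫ v, (f1 v + f3 v) ∂P := (integral_add hi1 hi3).symm
    _ = ∫ v, gtil v ∂P :=
        integral_congr_ae (Filter.Eventually.of_forall fun v => (hgtil v).symm)
end

section
/- (Generator duality between a finite-state Markov chain and its set-valued dual.) Let E be a finite set and (m_{i,j})_{i≠j} nonnegative rates. Define the Markov generator Q acting on functions f : E → ℝ by (Qf)(i) = Σ_{j≠i} m_{i,j}(f(j) − f(i)), and define the set-valued generator Q' acting on functions F : 𝒫(E) → ℝ (𝒫(E) = all subsets of E) by (Q'F)(A) = Σ_{i∉A} (Σ_{j∈A} m_{i,j}) (F(A ∪ {i}) − F(A)) + Σ_{i∈A} (Σ_{j∉A} m_{i,j}) (F(A \ {i}) − F(A)). Then for the duality function H(i, A) = 1_A(i), one has (Q H(·, A))(i) = (Q' H(i, ·))(A) for all i ∈ E and A ⊆ E. -/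
open Finset

/-- The generator of a finite-state Markov jump chain with rates `m i j` (for `i ≠ j`):
`(Qf)(i) = Σ_{j≠i} m_{i,j}(f(j) − f(i))`. -/
def chainGen {E : Type*} [Fintype E] [DecidableEq E]
    (m : E → E → ℝ) (f : E → ℝ) (i : E) : ℝ :=
  ∑ j : E, if j ≠ i then m i j * (f j - f i) else 0

/-- The generator of the set-valued dual chain:
`(Q'F)(A) = Σ_{i∉A}(Σ_{j∈A} m_{i,j})(F(A∪{i}) − F(A)) + Σ_{i∈A}(Σ_{j∉A} m_{i,j})(F(A∖{i}) − F(A))`. -/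
def setGen {E : Type*} [Fintype E] [DecidableEq E]
    (m : E → E → ℝ) (F : Finset E → ℝ) (A : Finset E) : ℝ :=
  ∑ i ∈ Aᶜ, (∑ j ∈ A, m i j) * (F (insert i A) - F A)
    + ∑ i ∈ A, (∑ j ∈ Aᶜ, m i j) * (F (A.erase i) - F A)

/-- Generator duality between a finite-state Markov chain and its set-valued dual, with
duality function `H(i, A) = 1_A(i)`. -/
theorem setvalued_generator_duality
    {E : Type*} [Fintype E] [DecidableEq E]
    (m : E → E → ℝ) (hm : ∀ i j : E, i ≠ j → 0 ≤ m i j) :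
    ∀ (i : E) (A : Finset E),
      chainGen m (fun x => if x ∈ A then (1 : ℝ) else 0) i
        = setGen m (fun B => if i ∈ B then (1 : ℝ) else 0) A := by
  intro i A
  unfold chainGen setGen
  by_cases hiA : i ∈ A
  · have h1 : ∑ k ∈ Aᶜ, (∑ j ∈ A, m k j) *
        ((if i ∈ insert k A then (1:ℝ) else 0) - (if i ∈ A then 1 else 0)) = 0 := by
      apply Finset.sum_eq_zero
      intro k _
      simp [Finset.mem_insert, hiA]
    have h2 : ∑ k ∈ A, (∑ j ∈ Aᶜ, m k j) *
        ((if i ∈ A.erase k then (1:ℝ) else 0) - (if i ∈ A then 1 else 0))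
        = -(∑ j ∈ Aᶜ, m i j) := by
      rw [Finset.sum_eq_single i]
      · simp [hiA]
      · intro k hk hki
        have : i ∈ A.erase k := Finset.mem_erase.mpr ⟨fun h => hki h.symm, hiA⟩
        simp [this, hiA]
      · intro h; exact absurd hiA h
    have hL : (∑ j : E, if j ≠ i then
        m i j * ((if j ∈ A then (1:ℝ) else 0) - (if i ∈ A then 1 else 0)) else 0)
        = ∑ j ∈ Aᶜ, -(m i j) := by
      rw [← Finset.sum_subset (Finset.subset_univ Aᶜ)]
      · apply Finset.sum_congr rfl
        intro j hj
        have hjA : j ∉ A := by simpa using hj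
        have hji : j ≠ i := fun h => hjA (h ▸ hiA)
        simp [hji, hjA, hiA]
      · intro j _ hj
        have hjA : j ∈ A := by simpa using hj
        by_cases h : j = i <;> simp [h, hjA, hiA]
    simp only [hL, h1, h2, zero_add, Finset.sum_neg_distrib]
  · have h2 : ∑ k ∈ A, (∑ j ∈ Aᶜ, m k j) *
        ((if i ∈ A.erase k then (1:ℝ) else 0) - (if i ∈ A then 1 else 0)) = 0 := by
      apply Finset.sum_eq_zero
      intro k hk
      have : i ∉ A.erase k := fun h => hiA (Finset.mem_of_mem_erase h)
      simp [this, hiA]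
    have h1 : ∑ k ∈ Aᶜ, (∑ j ∈ A, m k j) *
        ((if i ∈ insert k A then (1:ℝ) else 0) - (if i ∈ A then 1 else 0))
        = ∑ j ∈ A, m i j := by
      rw [Finset.sum_eq_single i]
      · simp [hiA]
      · intro k hk hki
        have : i ∉ insert k A := by simp [Finset.mem_insert, hiA, Ne.symm hki]
        simp [this, hiA]
      · intro h
        exact absurd (Finset.mem_compl.mpr hiA) h
    have hL : (∑ j : E, if j ≠ i then
        m i j * ((if j ∈ A then (1:ℝ) else 0) - (if i ∈ A then 1 else 0)) else 0)
        = ∑ j ∈ A, m i j := by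
      rw [← Finset.sum_subset (Finset.subset_univ A)]
      · apply Finset.sum_congr rfl
        intro j hj
        have hji : j ≠ i := fun h => hiA (h ▸ hj)
        simp [hji, hj, hiA]
      · intro j _ hj
        by_cases h : j = i <;> simp [h, hj, hiA]
    simp only [hL, h1, h2, add_zero]
end

section
/- (Duality identity for finite-state Markov chains via the set-valued dual.) Let E be a finite set, (m_{i,j}) nonnegative jump rates, (Z_t) the Markov jump process on E with generator (Qf)(i) = Σ_j m_{i,j}(f(j)−f(i)), and (A_t) the set-valued Markov jump process on subsets of E with transitions A → A ∪ {i} at rate Σ_{ℓ∈A} m_{i,ℓ} (for i ∉ A) and A → A \ {i} at rate Σ_{ℓ∉A} m_{i,ℓ} (for i ∈ A). Then for all t ≥ 0 and all i, j ∈ E: P[Z_t = j | Z_0 = i] = P[i ∈ A_t | A_0 = {j}]. Equivalently, for all A ⊆ E, P[Z_t ∈ A | Z_0 = i] = P[i ∈ A_t | A_0 = A]. -/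
open Finset

/-- The generator matrix of the Markov jump process on `E` with jump rates `m i j`. -/
def rateMatrix {E : Type*} [Fintype E] [DecidableEq E] (m : E → E → ℝ) :
    Matrix E E ℝ := fun i j =>
  if i = j then -(∑ k ∈ univ.erase i, m i k) else m i j

/-- The jump rate of the set-valued dual chain from `A` to `B`:
`A → A ∪ {i}` at rate `Σ_{ℓ∈A} m_{i,ℓ}` (for `i ∉ A`) and `A → A ∖ {i}` at rate
`Σ_{ℓ∉A} m_{i,ℓ}` (for `i ∈ A`). -/
def setRate {E : Type*} [Fintype E] [DecidableEq E] (m : E → E → ℝ)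
    (A B : Finset E) : ℝ :=
  (∑ i ∈ Aᶜ, if B = insert i A then ∑ ℓ ∈ A, m i ℓ else 0)
    + (∑ i ∈ A, if B = A.erase i then ∑ ℓ ∈ Aᶜ, m i ℓ else 0)

/-- The generator matrix of the set-valued dual chain. -/
def setRateMatrix {E : Type*} [Fintype E] [DecidableEq E] (m : E → E → ℝ) :
    Matrix (Finset E) (Finset E) ℝ := fun A B =>
  if B = A then -(∑ C ∈ univ.erase A, setRate m A C) else setRate m A B

/-! The duality function `H(i, A) = 1_{i ∈ A}` intertwines the generators: `Q H = H Q'ᵀ`.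
Both sides, evaluated at `(i, A)`, equal `∑_{ℓ ∈ A} m i ℓ` when `i ∉ A` and `-∑_{ℓ ∉ A} m i ℓ`
when `i ∈ A`, because `Q'` only moves `A` by adding or removing a single point. The intertwining
passes term by term to the exponential series, so `exp(tQ) H = H exp(tQ')ᵀ`, whose `(i, A)` entry
is the identity. -/

open Matrix NormedSpace
open scoped Nat

namespace Matrix

variable {m n 𝕂 : Type*} [Fintype m] [DecidableEq m] [Fintype n] [DecidableEq n] [RCLike 𝕂]

theorem pow_mul_eq_mul_pow_of_mul_eq {A : Matrix m m 𝕂} {B : Matrix n n 𝕂} {K : Matrix m n 𝕂}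
    (h : A * K = K * B) (k : ℕ) : A ^ k * K = K * B ^ k := by
  induction k with
  | zero => simp
  | succ k ih =>
    rw [pow_succ, pow_succ, Matrix.mul_assoc, h, ← Matrix.mul_assoc, ih, Matrix.mul_assoc]

open scoped Norms.Operator in
theorem exp_mul_eq_mul_exp_of_mul_eq {A : Matrix m m 𝕂} {B : Matrix n n 𝕂} {K : Matrix m n 𝕂}
    (h : A * K = K * B) : exp A * K = K * exp B := by
  have hA : HasSum (fun k => ((k ! : 𝕂)⁻¹ • A ^ k) * K) (exp A * K) :=
    (exp_series_hasSum_exp' A).map (addMonoidHomMulRight K)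
      (continuous_id.matrix_mul continuous_const)
  have hB : HasSum (fun k => K * ((k ! : 𝕂)⁻¹ • B ^ k)) (K * exp B) :=
    (exp_series_hasSum_exp' B).map (addMonoidHomMulLeft K)
      (continuous_const.matrix_mul continuous_id)
  simp only [Matrix.smul_mul, Matrix.mul_smul, pow_mul_eq_mul_pow_of_mul_eq h] at hA hB
  exact hA.unique hB

theorem mulVec_apply_eq_sum_mul_sub {R : Type*} [CommRing R]
    {Q : Matrix n n R} {r : n → n → R} (hoff : ∀ a b, a ≠ b → Q a b = r a b)
    (hdiag : ∀ a, Q a a = -∑ c ∈ univ.erase a, r a c) (f : n → R) (a : n) :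
    (Q *ᵥ f) a = ∑ b ∈ univ.erase a, r a b * (f b - f a) := by
  have hrow : ∑ b ∈ univ.erase a, Q a b * f b = ∑ b ∈ univ.erase a, r a b * f b :=
    sum_congr rfl fun b hb => by rw [hoff a b (ne_of_mem_erase hb).symm]
  rw [mulVec, dotProduct, ← add_sum_erase _ _ (mem_univ a), hdiag, hrow]
  simp only [mul_sub, sum_sub_distrib, ← sum_mul]
  ring

end Matrix

section Duality

variable {E : Type*} [Fintype E] [DecidableEq E] (m : E → E → ℝ)

theorem rateMatrix_mulVec_apply (f : E → ℝ) (i : E) :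
    (rateMatrix m *ᵥ f) i = ∑ j, m i j * (f j - f i) := by
  rw [mulVec_apply_eq_sum_mul_sub (Q := rateMatrix m) (r := m) (fun i j h => if_neg h)
    (fun i => if_pos rfl)]
  exact sum_erase _ (by rw [sub_self, mul_zero])

theorem setRate_self (A : Finset E) : setRate m A A = 0 := by
  have hins : ∀ j ∈ Aᶜ, A ≠ insert j A := fun j hj h => mem_compl.1 hj (h ▸ mem_insert_self j A)
  have hers : ∀ j ∈ A, A ≠ A.erase j := fun j hj h => notMem_erase j A (h ▸ hj)
  rw [setRate, sum_eq_zero fun j hj => if_neg (hins j hj),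
    sum_eq_zero fun j hj => if_neg (hers j hj), add_zero]

theorem setRateMatrix_mulVec_apply (f : Finset E → ℝ) (A : Finset E) :
    (setRateMatrix m *ᵥ f) A
      = ∑ j ∈ Aᶜ, (∑ ℓ ∈ A, m j ℓ) * (f (insert j A) - f A)
        + ∑ j ∈ A, (∑ ℓ ∈ Aᶜ, m j ℓ) * (f (A.erase j) - f A) := by
  rw [mulVec_apply_eq_sum_mul_sub (Q := setRateMatrix m) (r := setRate m)
    (fun A B h => if_neg (Ne.symm h)) (fun A => if_pos rfl),
    sum_erase _ (by rw [setRate_self, zero_mul])]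
  simp only [setRate, add_mul, sum_add_distrib, sum_mul, ite_mul, zero_mul]
  rw [sum_comm, sum_comm (s := univ)]
  simp only [sum_ite_eq', mem_univ, if_true]

def dualityMatrix (E : Type*) [DecidableEq E] : Matrix E (Finset E) ℝ :=
  fun i A => if i ∈ A then 1 else 0

theorem mul_dualityMatrix_apply {ι : Type*} (P : Matrix ι E ℝ) (i : ι) (A : Finset E) :
    (P * dualityMatrix E) i A = ∑ j ∈ A, P i j := by
  simp only [mul_apply, dualityMatrix, mul_ite, mul_one, mul_zero, sum_ite_mem, univ_inter]

theorem dualityMatrix_mul_transpose_apply {κ : Type*} [Fintype κ] (N : Matrix κ (Finset E) ℝ)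
    (i : E) (a : κ) :
    (dualityMatrix E * Nᵀ) i a = ∑ B ∈ univ.filter (fun B : Finset E => i ∈ B), N a B := by
  simp only [mul_apply, dualityMatrix, transpose_apply, ite_mul, one_mul, zero_mul, sum_filter]

theorem rateMatrix_mul_dualityMatrix_apply (i : E) (A : Finset E) :
    (rateMatrix m * dualityMatrix E) i A
      = if i ∈ A then -∑ ℓ ∈ Aᶜ, m i ℓ else ∑ ℓ ∈ A, m i ℓ := by
  change (rateMatrix m *ᵥ fun j => dualityMatrix E j A) i = _
  rw [rateMatrix_mulVec_apply]
  simp only [dualityMatrix, mul_sub, sum_sub_distrib, mul_ite, mul_one, mul_zero,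
    sum_ite_mem, univ_inter]
  by_cases hi : i ∈ A
  · simp only [hi, if_true, ← sum_add_sum_compl A (m i)]
    ring
  · simp only [hi, if_false, sum_const_zero, sub_zero]

theorem dualityMatrix_mul_transpose_setRateMatrix_apply (i : E) (A : Finset E) :
    (dualityMatrix E * (setRateMatrix m)ᵀ) i A
      = if i ∈ A then -∑ ℓ ∈ Aᶜ, m i ℓ else ∑ ℓ ∈ A, m i ℓ := by
  have hswap : (dualityMatrix E * (setRateMatrix m)ᵀ) i A
      = (setRateMatrix m *ᵥ fun B => dualityMatrix E i B) A := by
    simp only [mul_apply, transpose_apply, mulVec, dotProduct, mul_comm]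
  have hins : ∀ j ∈ Aᶜ,
      (∑ ℓ ∈ A, m j ℓ) * (dualityMatrix E i (insert j A) - dualityMatrix E i A)
        = if j = i then ∑ ℓ ∈ A, m j ℓ else 0 := by
    intro j hj
    by_cases hji : j = i
    · simp_all [dualityMatrix]
    · simp [dualityMatrix, hji, Ne.symm hji]
  have hers : ∀ j ∈ A,
      (∑ ℓ ∈ Aᶜ, m j ℓ) * (dualityMatrix E i (A.erase j) - dualityMatrix E i A)
        = -if j = i then ∑ ℓ ∈ Aᶜ, m j ℓ else 0 := by
    intro j hj
    by_cases hji : j = i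
    · simp_all [dualityMatrix]
    · simp [dualityMatrix, hji, Ne.symm hji]
  rw [hswap, setRateMatrix_mulVec_apply, sum_congr rfl hins, sum_congr rfl hers]
  by_cases hi : i ∈ A <;> simp [hi]

theorem rateMatrix_mul_dualityMatrix :
    rateMatrix m * dualityMatrix E = dualityMatrix E * (setRateMatrix m)ᵀ := by
  ext i A
  rw [rateMatrix_mul_dualityMatrix_apply, dualityMatrix_mul_transpose_setRateMatrix_apply]

end Duality

theorem setvalued_duality_identity_general
    {E : Type*} [Fintype E] [DecidableEq E]
    (m : E → E → ℝ) :
    ∀ t : ℝ, 0 ≤ t →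
      (∀ i j : E,
        NormedSpace.exp (t • rateMatrix m) i j
          = ∑ B ∈ univ.filter (fun B : Finset E => i ∈ B),
              NormedSpace.exp (t • setRateMatrix m) {j} B) ∧
      (∀ (i : E) (A : Finset E),
        ∑ j ∈ A, NormedSpace.exp (t • rateMatrix m) i j
          = ∑ B ∈ univ.filter (fun B : Finset E => i ∈ B),
              NormedSpace.exp (t • setRateMatrix m) A B) := by
  intro t _
  have hgen : t • rateMatrix m * dualityMatrix E = dualityMatrix E * (t • setRateMatrix m)ᵀ := by
    rw [transpose_smul, Matrix.smul_mul, Matrix.mul_smul, rateMatrix_mul_dualityMatrix]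
  have hexp := exp_mul_eq_mul_exp_of_mul_eq hgen
  rw [exp_transpose] at hexp
  have hsets : ∀ (i : E) (A : Finset E), ∑ j ∈ A, exp (t • rateMatrix m) i j
      = ∑ B ∈ univ.filter (fun B : Finset E => i ∈ B), exp (t • setRateMatrix m) A B :=
    fun i A => by
      rw [← mul_dualityMatrix_apply, hexp, dualityMatrix_mul_transpose_apply]
  exact ⟨fun i j => by rw [← hsets, sum_singleton], hsets⟩

/-- Duality identity for finite-state Markov chains via the set-valued dual:
`P[Z_t = j | Z_0 = i] = P[i ∈ A_t | A_0 = {j}]`, and more generally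
`P[Z_t ∈ A | Z_0 = i] = P[i ∈ A_t | A_0 = A]`, where the transition probabilities are
given by the matrix exponentials of the two generators. -/
theorem setvalued_duality_identity
    {E : Type*} [Fintype E] [DecidableEq E]
    (m : E → E → ℝ) (hm : ∀ i j : E, i ≠ j → 0 ≤ m i j) :
    ∀ t : ℝ, 0 ≤ t →
      (∀ i j : E,
        NormedSpace.exp (t • rateMatrix m) i j
          = ∑ B ∈ univ.filter (fun B : Finset E => i ∈ B),
              NormedSpace.exp (t • setRateMatrix m) {j} B) ∧
      (∀ (i : E) (A : Finset E),
        ∑ j ∈ A, NormedSpace.exp (t • rateMatrix m) i j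
          = ∑ B ∈ univ.filter (fun B : Finset E => i ∈ B),
              NormedSpace.exp (t • setRateMatrix m) A B) :=
  setvalued_duality_identity_general m
end
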